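/- arXiv:1602.08380 — 2 statements merged into one kernel-verified Lean document; each statement's English description precedes it below -/
import Mathlib

section
/- Let (X, f̂_{1,∞}) be a nonautonomous discrete dynamical system induced by (X, f_{1,∞}) via a strictly increasing sequence (k_n)_{n≥1} of positive integers, and let γ : ℕ → ℕ be γ(n) = k_n. If p and q are free ultrafilters on ℕ with p equal to the pushforward of q under γ, then f̂_1^q = f_1^p. In particular, E(X, f̂_{1,∞}) ⊆ E(X, f_{1,∞}). -/
open Filter Topology

/-- The `n`-th iterate `f_1^n = f_n ∘ ⋯ ∘ f_1` (maps indexed from `1`; `f 0` unused). -/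
def iterSeq {X : Type*} (f : ℕ → X → X) : ℕ → X → X
  | 0 => id
  | n + 1 => f (n + 1) ∘ iterSeq f n

/-- `compFrom f a m = f_{a+m} ∘ ⋯ ∘ f_a`. -/
def compFrom {X : Type*} (f : ℕ → X → X) (a : ℕ) : ℕ → X → X
  | 0 => f a
  | m + 1 => f (a + m + 1) ∘ compFrom f a m

/-- The maps `f̂_n` of the system induced by `(X, f_{1,∞})` via a strictly increasing
sequence `(k_n)_{n≥1}`: `f̂_1 = f_{k_1} ∘ ⋯ ∘ f_1` and `f̂_n = f_{k_n} ∘ ⋯ ∘ f_{k_{n−1}+1}`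
for `n > 1` (`hatMaps f k 0` is unused). -/
def hatMaps {X : Type*} (f : ℕ → X → X) (k : ℕ → ℕ) : ℕ → X → X
  | 0 => id
  | 1 => iterSeq f (k 1)
  | n + 2 => compFrom f (k (n + 1) + 1) (k (n + 2) - k (n + 1) - 1)

/-- The `p`-limit of a sequence `u` with respect to an ultrafilter `p` on `ℕ`. -/
noncomputable def pLim {X : Type*} [TopologicalSpace X] (p : Ultrafilter ℕ) (u : ℕ → X) : X :=
  letI : Nonempty X := ⟨u 0⟩
  limUnder (p : Filter ℕ) u

/-- `f_1^p(x) = p-lim_n f_1^n(x)`. -/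
noncomputable def pIter {X : Type*} [TopologicalSpace X] (f : ℕ → X → X)
    (p : Ultrafilter ℕ) : X → X :=
  fun x => pLim p fun n => iterSeq f n x

lemma compFrom_iterSeq {X : Type*} (f : ℕ → X → X) (m a : ℕ) :
    (compFrom f (a + 1) m) ∘ iterSeq f a = iterSeq f (a + m + 1) := by
  induction m with
  | zero => rfl
  | succ m ih =>
    show (f (a + 1 + m + 1) ∘ compFrom f (a + 1) m) ∘ iterSeq f a = iterSeq f (a + (m + 1) + 1)
    have : a + (m + 1) + 1 = (a + m + 1) + 1 := by omega
    rw [this]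
    show f (a + 1 + m + 1) ∘ (compFrom f (a + 1) m ∘ iterSeq f a)
        = f (a + m + 1 + 1) ∘ iterSeq f (a + m + 1)
    rw [ih, show a + 1 + m + 1 = a + m + 1 + 1 from by omega]

lemma hat_iterSeq {X : Type*} (f : ℕ → X → X) (k : ℕ → ℕ)
    (hmono : ∀ m n, 1 ≤ m → m < n → k m < k n) :
    ∀ n, 1 ≤ n → iterSeq (hatMaps f k) n = iterSeq f (k n) := by
  intro n hn
  induction n, hn using Nat.le_induction with
  | base =>
    show hatMaps f k 1 ∘ id = iterSeq f (k 1)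
    rw [Function.comp_id]
    rfl
  | succ n hn ih =>
    obtain ⟨m, rfl⟩ := Nat.exists_eq_add_of_le' hn
    show hatMaps f k (m + 2) ∘ iterSeq (hatMaps f k) (m + 1) = _
    rw [ih]
    show compFrom f (k (m + 1) + 1) (k (m + 2) - k (m + 1) - 1) ∘ iterSeq f (k (m + 1)) = _
    rw [compFrom_iterSeq]
    have hlt : k (m + 1) < k (m + 2) := hmono (m + 1) (m + 2) (by omega) (by omega)
    rw [show k (m + 1) + (k (m + 2) - k (m + 1) - 1) + 1 = k (m + 2) from by omega]

/-- Let `(X, f̂_{1,∞})` be the system induced by `(X, f_{1,∞})` via a strictly increasing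
sequence `(k_n)_{n≥1}` of positive integers, and let `γ : ℕ → ℕ`, `γ(n) = k_n`.  If `p` and
`q` are free ultrafilters with `p` the pushforward of `q` under `γ`, then `f̂_1^q = f_1^p`.
In particular, `E(X, f̂_{1,∞}) ⊆ E(X, f_{1,∞})`. -/
theorem stmt5 {X : Type*} [MetricSpace X] [CompactSpace X]
    (f : ℕ → X → X) (hf : ∀ n, 1 ≤ n → Continuous (f n))
    (k : ℕ → ℕ) (hpos : ∀ n, 1 ≤ n → 0 < k n)
    (hmono : ∀ m n, 1 ≤ m → m < n → k m < k n)
    (q : Ultrafilter ℕ) (hq : (q : Filter ℕ) ≤ Filter.cofinite)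
    (p : Ultrafilter ℕ) (hp : (p : Filter ℕ) ≤ Filter.cofinite)
    (hmap : q.map k = p) :
    pIter (hatMaps f k) q = pIter f p ∧
    closure {h : X → X | ∃ n : ℕ, h = iterSeq (hatMaps f k) n}
      ⊆ closure {h : X → X | ∃ n : ℕ, h = iterSeq f n} := by
  have key : pIter (hatMaps f k) q = pIter f p := by
    funext x
    show pLim q (fun n => iterSeq (hatMaps f k) n x) = pLim p (fun n => iterSeq f n x)
    have hev : (fun n => iterSeq (hatMaps f k) n x) =ᶠ[(q : Filter ℕ)]
        (fun n => iterSeq f (k n) x) := by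
      have : {n : ℕ | 1 ≤ n} ∈ (q : Filter ℕ) := by
        apply hq
        simp [Filter.mem_cofinite]
        have : {n : ℕ | 1 ≤ n}ᶜ ⊆ {0} := by
          intro n hn; simp at hn ⊢; omega
        exact Set.Finite.subset (Set.finite_singleton 0) this
      filter_upwards [this] with n hn
      rw [hat_iterSeq f k hmono n hn]
    unfold pLim limUnder
    rw [Filter.map_congr hev]
    have : Filter.map (fun n => iterSeq f (k n) x) (q : Filter ℕ)
        = Filter.map (fun n => iterSeq f n x) (p : Filter ℕ) := by
      rw [← hmap]
      rw [show (fun n => iterSeq f (k n) x) = (fun n => iterSeq f n x) ∘ k from rfl,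
        ← Filter.map_map]
      rfl
    rw [this]
  refine ⟨key, closure_mono ?_⟩
  rintro h ⟨n, rfl⟩
  rcases Nat.eq_zero_or_pos n with rfl | hn
  · exact ⟨0, rfl⟩
  · exact ⟨k n, hat_iterSeq f k hmono n hn⟩
end

section
/- Let (X, f̂_{1,∞}) be a nonautonomous discrete dynamical system induced by (X, f_{1,∞}) via a strictly increasing sequence (k_n)_{n≥1} of positive integers satisfying k_{n+m} = k_n + k_m for all n, m. Then for all ultrafilters p, q on ℕ, f̂_1^{p+q} = f_1^{p′+q′}, where p′ and q′ are the pushforwards of p and q under γ(n) = k_n; consequently E(X, f̂_{1,∞}) is a subsemigroup of E(X, f_{1,∞}) under the operation f_1^p ∗ f_1^q := f_1^{q+p}. -/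
open Filter Topology

/-- The sum of two ultrafilters on `ℕ`: `A ∈ p + q` iff `{n : {m : m + n ∈ A} ∈ p} ∈ q`. -/
def uAdd (p q : Ultrafilter ℕ) : Ultrafilter ℕ :=
  q.bind fun n => p.map fun m => m + n

lemma compFrom_iter {X : Type*} (f : ℕ → X → X) (a : ℕ) :
    ∀ m x, compFrom f (a + 1) m (iterSeq f a x) = iterSeq f (a + m + 1) x := by
  intro m
  induction m with
  | zero => intro x; rfl
  | succ m ih =>
      intro x
      have h1 : compFrom f (a + 1) (m + 1) (iterSeq f a x)
          = f (a + 1 + m + 1) (compFrom f (a + 1) m (iterSeq f a x)) := rfl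
      rw [h1, ih]
      have h2 : a + 1 + m + 1 = (a + m + 1) + 1 := by omega
      rw [h2]
      rfl

lemma iter_hat {X : Type*} (f : ℕ → X → X) (k : ℕ → ℕ) (hk0 : k 0 = 0)
    (hmono : ∀ m n, 1 ≤ m → m < n → k m < k n) :
    ∀ n, iterSeq (hatMaps f k) n = iterSeq f (k n) := by
  intro n
  induction n with
  | zero => rw [hk0]; rfl
  | succ n ih =>
      cases n with
      | zero =>
          funext x
          show hatMaps f k 1 (iterSeq (hatMaps f k) 0 x) = iterSeq f (k 1) x
          rfl
      | succ m =>
          funext x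
          have h1 : iterSeq (hatMaps f k) (m + 2) x
              = hatMaps f k (m + 2) (iterSeq (hatMaps f k) (m + 1) x) := rfl
          rw [h1, ih]
          have hlt : k (m + 1) < k (m + 2) := hmono (m + 1) (m + 2) (by omega) (by omega)
          have h2 : hatMaps f k (m + 2) (iterSeq f (k (m + 1)) x)
              = compFrom f (k (m + 1) + 1) (k (m + 2) - k (m + 1) - 1)
                  (iterSeq f (k (m + 1)) x) := rfl
          rw [h2, compFrom_iter]
          have h3 : k (m + 1) + (k (m + 2) - k (m + 1) - 1) + 1 = k (m + 2) := by omega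
          rw [h3]

lemma kadd_full (k : ℕ → ℕ) (hk0 : k 0 = 0)
    (hadd : ∀ n m, 1 ≤ n → 1 ≤ m → k (n + m) = k n + k m) :
    ∀ m n, k (m + n) = k m + k n := by
  intro m n
  rcases Nat.eq_zero_or_pos m with hm | hm
  · simp [hm, hk0]
  rcases Nat.eq_zero_or_pos n with hn | hn
  · simp [hn, hk0]
  exact hadd m n hm hn

lemma pLim_eq {X : Type*} [TopologicalSpace X] (p q : Ultrafilter ℕ) (u v : ℕ → X)
    (h : Filter.map u ↑p = Filter.map v ↑q) : pLim p u = pLim q v := by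
  show @lim X _ ⟨u 0⟩ (Filter.map u ↑p) = @lim X _ ⟨v 0⟩ (Filter.map v ↑q)
  rw [h]

lemma umem_bind {q : Ultrafilter ℕ} {m : ℕ → Ultrafilter ℕ} {s : Set ℕ} :
    s ∈ q.bind m ↔ {n | s ∈ m n} ∈ q := Filter.mem_bind'

lemma map_uAdd (k : ℕ → ℕ) (hk : ∀ m n, k (m + n) = k m + k n) (p q : Ultrafilter ℕ) :
    Ultrafilter.map k (uAdd p q) = uAdd (p.map k) (q.map k) := by
  apply Ultrafilter.coe_injective
  apply Filter.ext
  intro s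
  show s ∈ Ultrafilter.map k (uAdd p q) ↔ s ∈ uAdd (p.map k) (q.map k)
  rw [Ultrafilter.mem_map]
  rw [show (uAdd p q = q.bind fun n => p.map fun m => m + n) from rfl]
  rw [show (uAdd (p.map k) (q.map k)
      = (q.map k).bind fun n => (p.map k).map fun m => m + n) from rfl]
  rw [umem_bind, umem_bind, Ultrafilter.mem_map]
  simp only [Ultrafilter.mem_map, Set.preimage_setOf_eq, Set.preimage_preimage]
  have hset : {n | (fun x => k (x + n)) ⁻¹' s ∈ p} = {a | (fun x => k x + k a) ⁻¹' s ∈ p} := by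
    ext n
    show (fun x => k (x + n)) ⁻¹' s ∈ p ↔ (fun x => k x + k n) ⁻¹' s ∈ p
    have h : (fun x => k (x + n)) = fun x => k x + k n := funext fun x => hk x n
    rw [h]
  rw [hset]

lemma pIter_mem_closure {X : Type*} [MetricSpace X] [CompactSpace X] (g : ℕ → X → X)
    (r : Ultrafilter ℕ) :
    pIter g r ∈ closure {h : X → X | ∃ n : ℕ, h = iterSeq g n} := by
  have htend : Tendsto (fun n => iterSeq g n) (↑r : Filter ℕ) (𝓝 (pIter g r)) := by
    rw [tendsto_pi_nhds]
    intro x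
    have h1 : Tendsto (fun n => iterSeq g n x) (↑r : Filter ℕ)
        (𝓝 (Ultrafilter.map (fun n => iterSeq g n x) r).lim) := by
      have := (Ultrafilter.map (fun n => iterSeq g n x) r).le_nhds_lim
      rwa [Ultrafilter.coe_map] at this
    have h2 : pIter g r x = (Ultrafilter.map (fun n => iterSeq g n x) r).lim := by
      letI : Nonempty X := ⟨x⟩
      exact h1.limUnder_eq.symm
    rw [h2]; exact h1
  exact mem_closure_of_tendsto htend (Eventually.of_forall fun n => ⟨n, rfl⟩)

/-- Let `(X, f̂_{1,∞})` be induced by `(X, f_{1,∞})` via a strictly increasing sequence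
`(k_n)_{n≥1}` of positive integers with `k_{n+m} = k_n + k_m` for all `n, m ≥ 1` (we
normalize `k 0 = 0`, the value `k 0` not being part of the data).  Then for all
ultrafilters `p, q` on `ℕ`, `f̂_1^{p+q} = f_1^{p′+q′}` where `p′, q′` are the pushforwards
of `p, q` under `γ(n) = k_n`; consequently `E(X, f̂_{1,∞})` is a subsemigroup of
`E(X, f_{1,∞})` under the operation `f_1^p ∗ f_1^q := f_1^{q+p}`. -/
theorem stmt7 {X : Type*} [MetricSpace X] [CompactSpace X]
    (f : ℕ → X → X) (hf : ∀ n, 1 ≤ n → Continuous (f n))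
    (k : ℕ → ℕ) (hk0 : k 0 = 0) (hpos : ∀ n, 1 ≤ n → 0 < k n)
    (hmono : ∀ m n, 1 ≤ m → m < n → k m < k n)
    (hadd : ∀ n m, 1 ≤ n → 1 ≤ m → k (n + m) = k n + k m) :
    (∀ p q : Ultrafilter ℕ,
        pIter (hatMaps f k) (uAdd p q) = pIter f (uAdd (p.map k) (q.map k))) ∧
    closure {h : X → X | ∃ n : ℕ, h = iterSeq (hatMaps f k) n}
      ⊆ closure {h : X → X | ∃ n : ℕ, h = iterSeq f n} ∧
    (∀ p q : Ultrafilter ℕ,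
        pIter f (uAdd (q.map k) (p.map k)) ∈
          closure {h : X → X | ∃ n : ℕ, h = iterSeq (hatMaps f k) n}) := by
  have hkadd := kadd_full k hk0 hadd
  have hiter := iter_hat f k hk0 hmono
  have hpIter : ∀ r : Ultrafilter ℕ, pIter (hatMaps f k) r = pIter f (r.map k) := by
    intro r
    funext x
    apply pLim_eq
    rw [Ultrafilter.coe_map, Filter.map_map]
    congr 1
    funext n
    show iterSeq (hatMaps f k) n x = iterSeq f (k n) x
    rw [hiter n]
  refine ⟨?_, ?_, ?_⟩
  · intro p q
    rw [hpIter, map_uAdd k hkadd]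
  · apply closure_mono
    rintro h ⟨n, rfl⟩
    exact ⟨k n, hiter n⟩
  · intro p q
    rw [← map_uAdd k hkadd, ← hpIter]
    exact pIter_mem_closure _ _
end
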